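/- The first ℓ∞-cohomology of a connected graph X with coefficients in a normed vector space V is isomorphic to the space of Lipschitz functions from the vertex set of X to V modulo bounded functions. -/

import Mathlib

open Finsupp

variable {V : Type*}

/-- 0-chains. -/
abbrev C0 (V : Type*) := V →₀ ℝ
/-- 1-chains: free real vector space on ordered pairs of vertices. -/
abbrev C1 (V : Type*) := (V × V) →₀ ℝ
/-- 2-chains: free real vector space on ordered triples of vertices. -/
abbrev C2 (V : Type*) := (V × V × V) →₀ ℝ
/-- 3-chains. -/
abbrev C3 (V : Type*) := (V × V × V × V) →₀ ℝ

/-- ℓ¹-norm of a finitely supported chain. -/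
noncomputable def l1 {α : Type*} (c : α →₀ ℝ) : ℝ := c.support.sum fun t => |c t|

/-- Boundary map ∂ : C₂ → C₁, (x₀,x₁,x₂) ↦ (x₁,x₂) − (x₀,x₂) + (x₀,x₁). -/
noncomputable def bdry2 : C2 V →ₗ[ℝ] C1 V :=
  Finsupp.lsum ℝ fun t => LinearMap.toSpanSingleton ℝ (C1 V)
    (single (t.2.1, t.2.2) 1 - single (t.1, t.2.2) 1 + single (t.1, t.2.1) 1)

/-- Boundary map ∂ : C₁ → C₀, (x₀,x₁) ↦ x₁ − x₀. -/
noncomputable def bdry1 : C1 V →ₗ[ℝ] C0 V :=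
  Finsupp.lsum ℝ fun t => LinearMap.toSpanSingleton ℝ (C0 V)
    (single t.2 1 - single t.1 1)

/-- Boundary map ∂ : C₃ → C₂. -/
noncomputable def bdry3 : C3 V →ₗ[ℝ] C2 V :=
  Finsupp.lsum ℝ fun t => LinearMap.toSpanSingleton ℝ (C2 V)
    (single (t.2.1, t.2.2.1, t.2.2.2) 1 - single (t.1, t.2.2.1, t.2.2.2) 1
      + single (t.1, t.2.1, t.2.2.2) 1 - single (t.1, t.2.1, t.2.2.1) 1)

/-- Two vertices are at (finite) distance at most R. -/
def pairOK (G : SimpleGraph V) (R : ℕ) (a b : V) : Prop :=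
  G.Reachable a b ∧ G.dist a b ≤ R

/-- Membership in C₁^R : supported on pairs at distance ≤ R. -/
def memC1R (G : SimpleGraph V) (R : ℕ) (c : C1 V) : Prop :=
  ∀ t ∈ c.support, pairOK G R t.1 t.2

/-- Membership in C₂^R : supported on triples of diameter ≤ R. -/
def memC2R (G : SimpleGraph V) (R : ℕ) (c : C2 V) : Prop :=
  ∀ t ∈ c.support, pairOK G R t.1 t.2.1 ∧ pairOK G R t.1 t.2.2 ∧ pairOK G R t.2.1 t.2.2

/-- Membership in B₁^R = ∂C₂^R. -/
def memB1R (G : SimpleGraph V) (R : ℕ) (b : C1 V) : Prop :=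
  ∃ a : C2 V, memC2R G R a ∧ bdry2 a = b

/-- The filling norm ‖b‖_F^R = inf of ℓ¹-norms of fillings in C₂^R. -/
noncomputable def fillNorm (G : SimpleGraph V) (R : ℕ) (b : C1 V) : ℝ :=
  sInf {r | ∃ a : C2 V, memC2R G R a ∧ bdry2 a = b ∧ r = l1 a}

/-- The 1-chain c(p) associated to a walk p. -/
noncomputable def walkChain (G : SimpleGraph V) {x y : V} (p : G.Walk x y) : C1 V :=
  (p.darts.map fun d => single d.toProd (1 : ℝ)).sum

/-- A walk is geodesic if its length realizes the distance of its endpoints. -/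
def IsGeodesicWalk (G : SimpleGraph V) {x y : V} (p : G.Walk x y) : Prop :=
  p.length = G.dist x y

/-- Geodesic triangles of G are n-slim. -/
def SlimTriangles (G : SimpleGraph V) (n : ℕ) : Prop :=
  ∀ (x y z : V) (p : G.Walk x y) (q : G.Walk y z) (r : G.Walk x z),
    IsGeodesicWalk G p → IsGeodesicWalk G q → IsGeodesicWalk G r →
    (∀ v ∈ p.support, ∃ w, (w ∈ q.support ∨ w ∈ r.support) ∧ G.dist v w ≤ n) ∧
    (∀ v ∈ q.support, ∃ w, (w ∈ p.support ∨ w ∈ r.support) ∧ G.dist v w ≤ n) ∧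
    (∀ v ∈ r.support, ∃ w, (w ∈ p.support ∨ w ∈ q.support) ∧ G.dist v w ≤ n)

/-- A real chain has integer coefficients. -/
def IntCoeffs {α : Type*} (c : α →₀ ℝ) : Prop := ∀ t, ∃ n : ℤ, c t = n

/-- X has a finite homological isoperimetric function with parameters R₀, θ :
for every closed path p, c(p) ∈ B₁^{R₀} and ‖c(p)‖_F^{R₀} ≤ θ(length p). -/
def FinHomIsop (G : SimpleGraph V) (R₀ : ℕ) (θ : ℕ → ℝ) : Prop :=
  ∀ (x : V) (p : G.Walk x x), memB1R G R₀ (walkChain G p) ∧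
    fillNorm G R₀ (walkChain G p) ≤ θ p.length

/-- A 2-cochain is bounded on each C₂^R. -/
def Bdd2 {W : Type*} [NormedAddCommGroup W] [NormedSpace ℝ W]
    (G : SimpleGraph V) (f : C2 V →ₗ[ℝ] W) : Prop :=
  ∀ R : ℕ, ∃ M : ℝ, ∀ c : C2 V, memC2R G R c → ‖f c‖ ≤ M * l1 c

/-- A 1-cochain is bounded on each C₁^R. -/
def Bdd1 {W : Type*} [NormedAddCommGroup W] [NormedSpace ℝ W]
    (G : SimpleGraph V) (f : C1 V →ₗ[ℝ] W) : Prop :=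
  ∀ R : ℕ, ∃ M : ℝ, ∀ c : C1 V, memC1R G R c → ‖f c‖ ≤ M * l1 c

/-- A Banach space is 1-injective: bounded linear maps into it extend from
subspaces of normed spaces with the same norm. -/
def IsOneInjective (W : Type*) [NormedAddCommGroup W] [NormedSpace ℝ W] : Prop :=
  ∀ (E : Type) [NormedAddCommGroup E] [NormedSpace ℝ E],
    ∀ (p : Subspace ℝ E) (φ : p →L[ℝ] W),
      ∃ ψ : E →L[ℝ] W, (∀ x : p, ψ x = φ x) ∧ ‖ψ‖ ≤ ‖φ‖

variable (W : Type*) [NormedAddCommGroup W] [NormedSpace ℝ W]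

lemma l1_nonneg {α : Type*} (c : α →₀ ℝ) : 0 ≤ l1 c :=
  Finset.sum_nonneg fun _ _ => abs_nonneg _

/-- The ℓ∞ 1-cocycles: linear maps C₁ → W bounded on each C₁^R and vanishing
on boundaries of 2-chains. -/
noncomputable def Zone (G : SimpleGraph V) : Submodule ℝ (C1 V →ₗ[ℝ] W) where
  carrier := {f | (∀ R : ℕ, ∃ M : ℝ, ∀ c : C1 V, memC1R G R c → ‖f c‖ ≤ M * l1 c) ∧
    ∀ a : C2 V, f (bdry2 a) = 0}
  zero_mem' := by
    refine ⟨fun R => ⟨0, fun c _ => by simp⟩, fun a => rfl⟩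
  add_mem' := by
    rintro f g ⟨hf, hf0⟩ ⟨hg, hg0⟩
    refine ⟨fun R => ?_, fun a => by simp [hf0 a, hg0 a]⟩
    obtain ⟨M, hM⟩ := hf R
    obtain ⟨N, hN⟩ := hg R
    refine ⟨M + N, fun c hc => ?_⟩
    calc ‖(f + g) c‖ = ‖f c + g c‖ := by simp
      _ ≤ ‖f c‖ + ‖g c‖ := norm_add_le _ _
      _ ≤ M * l1 c + N * l1 c := add_le_add (hM c hc) (hN c hc)
      _ = (M + N) * l1 c := by ring
  smul_mem' := by
    rintro r f ⟨hf, hf0⟩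
    refine ⟨fun R => ?_, fun a => by simp [hf0 a]⟩
    obtain ⟨M, hM⟩ := hf R
    refine ⟨|r| * M, fun c hc => ?_⟩
    calc ‖(r • f) c‖ = |r| * ‖f c‖ := by
          simp [norm_smul, Real.norm_eq_abs]
      _ ≤ |r| * (M * l1 c) := mul_le_mul_of_nonneg_left (hM c hc) (abs_nonneg r)
      _ = |r| * M * l1 c := by ring
/-- The ℓ∞ 1-coboundaries: coboundaries of bounded 0-cochains. -/
noncomputable def Bone (G : SimpleGraph V) : Submodule ℝ (C1 V →ₗ[ℝ] W) where
  carrier := {f | ∃ g : C0 V →ₗ[ℝ] W,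
    (∃ M : ℝ, ∀ c : C0 V, ‖g c‖ ≤ M * l1 c) ∧ f = g.comp bdry1}
  zero_mem' := ⟨0, ⟨0, fun c => by simp⟩, by simp⟩
  add_mem' := by
    rintro f g ⟨gf, ⟨M, hM⟩, rfl⟩ ⟨gg, ⟨N, hN⟩, rfl⟩
    refine ⟨gf + gg, ⟨M + N, fun c => ?_⟩, by rw [LinearMap.add_comp]⟩
    calc ‖(gf + gg) c‖ = ‖gf c + gg c‖ := by simp
      _ ≤ ‖gf c‖ + ‖gg c‖ := norm_add_le _ _
      _ ≤ M * l1 c + N * l1 c := add_le_add (hM c) (hN c)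
      _ = (M + N) * l1 c := by ring
  smul_mem' := by
    rintro r f ⟨gf, ⟨M, hM⟩, rfl⟩
    refine ⟨r • gf, ⟨|r| * M, fun c => ?_⟩, by rw [LinearMap.smul_comp]⟩
    calc ‖(r • gf) c‖ = |r| * ‖gf c‖ := by simp [norm_smul, Real.norm_eq_abs]
      _ ≤ |r| * (M * l1 c) := mul_le_mul_of_nonneg_left (hM c) (abs_nonneg r)
      _ = |r| * M * l1 c := by ring

/-- Lipschitz functions from the vertex set to W (w.r.t. the graph metric). -/
def LipFuns (G : SimpleGraph V) : Submodule ℝ (V → W) where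
  carrier := {f | ∃ L : ℝ, ∀ x y : V, ‖f x - f y‖ ≤ L * (G.dist x y : ℝ)}
  zero_mem' := ⟨0, fun x y => by simp⟩
  add_mem' := by
    rintro f g ⟨L, hL⟩ ⟨K, hK⟩
    refine ⟨L + K, fun x y => ?_⟩
    calc ‖(f + g) x - (f + g) y‖ = ‖(f x - f y) + (g x - g y)‖ := by
          simp only [Pi.add_apply]
          congr 1
          abel
      _ ≤ ‖f x - f y‖ + ‖g x - g y‖ := norm_add_le _ _
      _ ≤ L * (G.dist x y : ℝ) + K * (G.dist x y : ℝ) := add_le_add (hL x y) (hK x y)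
      _ = (L + K) * (G.dist x y : ℝ) := by ring
  smul_mem' := by
    rintro r f ⟨L, hL⟩
    refine ⟨|r| * L, fun x y => ?_⟩
    calc ‖(r • f) x - (r • f) y‖ = |r| * ‖f x - f y‖ := by
          simp only [Pi.smul_apply, ← smul_sub, norm_smul, Real.norm_eq_abs]
      _ ≤ |r| * (L * (G.dist x y : ℝ)) :=
          mul_le_mul_of_nonneg_left (hL x y) (abs_nonneg r)
      _ = |r| * L * (G.dist x y : ℝ) := by ring

/-- Bounded functions from the vertex set to W. -/
def BddFuns : Submodule ℝ (V → W) where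
  carrier := {f | ∃ M : ℝ, ∀ x : V, ‖f x‖ ≤ M}
  zero_mem' := ⟨0, fun x => by simp⟩
  add_mem' := by
    rintro f g ⟨M, hM⟩ ⟨N, hN⟩
    exact ⟨M + N, fun x => (norm_add_le _ _).trans (add_le_add (hM x) (hN x))⟩
  smul_mem' := by
    rintro r f ⟨M, hM⟩
    refine ⟨|r| * M, fun x => ?_⟩
    calc ‖(r • f) x‖ = |r| * ‖f x‖ := by simp [norm_smul, Real.norm_eq_abs]
      _ ≤ |r| * M := mul_le_mul_of_nonneg_left (hM x) (abs_nonneg r)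

/-!
A 1-cocycle `f` is the coboundary of the vertex function `x ↦ f (x₀, x)`, because it vanishes
on `∂(x₀, x, y)`. Boundedness of `f` on edges is exactly the Lipschitz property of that function
(the graph being connected, distances are lengths of walks), and `δg` is the coboundary of a
bounded 0-cochain exactly when `g` itself is bounded, since two 0-cochains with the same
coboundary differ by a constant. Hence `g ↦ δg` maps Lipschitz functions onto 1-cocycles, with
preimage of the coboundaries the bounded functions.
-/

section Cobdry

variable {W}

lemma norm_apply_le_mul_l1 {α : Type*} (φ : (α →₀ ℝ) →ₗ[ℝ] W) (c : α →₀ ℝ) {K : ℝ}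
    (h : ∀ t ∈ c.support, ‖φ (single t 1)‖ ≤ K) : ‖φ c‖ ≤ K * l1 c := by
  conv_lhs => rw [← c.sum_single]
  rw [map_finsuppSum]
  calc ‖c.sum fun t r => φ (single t r)‖
      ≤ ∑ t ∈ c.support, ‖φ (single t (c t))‖ := norm_sum_le _ _
    _ ≤ ∑ t ∈ c.support, |c t| * K := by
        refine Finset.sum_le_sum fun t ht => ?_
        rw [← smul_single_one, map_smul, norm_smul, Real.norm_eq_abs]
        exact mul_le_mul_of_nonneg_left (h t ht) (abs_nonneg _)
    _ = K * l1 c := by rw [l1, ← Finset.sum_mul, mul_comm]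

lemma l1_single {α : Type*} (a : α) : l1 (single a (1 : ℝ)) = 1 := by
  simp [l1]

lemma bdry1_comp_bdry2 : (bdry1 : C1 V →ₗ[ℝ] C0 V) ∘ₗ bdry2 = 0 := by
  refine lhom_ext fun t r => ?_
  simp only [LinearMap.comp_apply, bdry2, bdry1, lsum_single, LinearMap.toSpanSingleton_apply,
    map_smul, map_add, map_sub, one_smul, LinearMap.zero_apply]
  exact smul_eq_zero_of_right r (by abel)

variable (W) in
noncomputable def cobdry : (V → W) →ₗ[ℝ] C1 V →ₗ[ℝ] W :=
  LinearMap.lcomp ℝ W bdry1 ∘ₗ (llift W ℝ ℝ V).toLinearMap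

lemma cobdry_apply (g : V → W) (c : C1 V) : cobdry W g c = llift W ℝ ℝ V g (bdry1 c) := rfl

lemma cobdry_single (g : V → W) (x y : V) (r : ℝ) :
    cobdry W g (single (x, y) r) = r • (g y - g x) := by
  simp only [cobdry_apply, bdry1, lsum_single, LinearMap.toSpanSingleton_apply, map_smul,
    map_sub, one_smul, llift_apply, lift_apply, sum_single_index, zero_smul]

lemma cobdry_bdry2 (g : V → W) (a : C2 V) : cobdry W g (bdry2 a) = 0 := by
  rw [cobdry_apply, ← LinearMap.comp_apply bdry1, bdry1_comp_bdry2, LinearMap.zero_apply,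
    map_zero]

lemma cobdry_mem_Zone {G : SimpleGraph V} {g : V → W} (hg : g ∈ LipFuns W G) :
    cobdry W g ∈ Zone W G := by
  obtain ⟨L, hL⟩ := hg
  refine ⟨fun R => ⟨max L 0 * R, fun c hc => norm_apply_le_mul_l1 _ c fun t ht => ?_⟩,
    cobdry_bdry2 g⟩
  obtain ⟨-, hdist⟩ := hc t ht
  rw [SimpleGraph.dist_comm] at hdist
  rw [cobdry_single, one_smul]
  calc ‖g t.2 - g t.1‖ ≤ L * G.dist t.2 t.1 := hL _ _
    _ ≤ max L 0 * G.dist t.2 t.1 := by gcongr; exact le_max_left _ _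
    _ ≤ max L 0 * R := by gcongr

lemma cobdry_eq_of_cocycle {f : C1 V →ₗ[ℝ] W} (hf : ∀ a : C2 V, f (bdry2 a) = 0) (x₀ : V) :
    cobdry W (fun x => f (single (x₀, x) 1)) = f := by
  refine lhom_ext fun ⟨x, y⟩ r => ?_
  have hcocycle := hf (single (x₀, x, y) 1)
  simp only [bdry2, lsum_single, LinearMap.toSpanSingleton_apply, one_smul, map_add,
    map_sub] at hcocycle
  rw [cobdry_single, ← smul_single_one (x, y) r, map_smul]
  congr 1
  rw [← sub_eq_zero, ← neg_eq_zero, ← hcocycle]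
  abel

lemma cobdry_mem_Bone_iff {G : SimpleGraph V} {g : V → W} :
    cobdry W g ∈ Bone W G ↔ g ∈ BddFuns W := by
  constructor
  · rintro ⟨h, ⟨M, hM⟩, hgh⟩
    rcases isEmpty_or_nonempty V with _ | ⟨⟨x₀⟩⟩
    · exact ⟨0, fun x => isEmptyElim x⟩
    have hconst : ∀ x, g x = (g x₀ - h (single x₀ 1)) + h (single x 1) := fun x => by
      have hx := congrArg (fun φ : C1 V →ₗ[ℝ] W => φ (single (x₀, x) 1)) hgh
      simp only [cobdry_single, one_smul, LinearMap.comp_apply, bdry1, lsum_single,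
        LinearMap.toSpanSingleton_apply, map_sub] at hx
      calc g x = g x₀ + (g x - g x₀) := by abel
        _ = _ := by rw [hx]; abel
    refine ⟨‖g x₀ - h (single x₀ 1)‖ + M, fun x => ?_⟩
    rw [hconst x]
    calc _ ≤ ‖g x₀ - h (single x₀ 1)‖ + ‖h (single x 1)‖ := norm_add_le _ _
      _ ≤ ‖g x₀ - h (single x₀ 1)‖ + M := by
          gcongr
          simpa only [l1_single, mul_one] using hM (single x 1)
  · rintro ⟨M, hM⟩
    refine ⟨llift W ℝ ℝ V g, ⟨M, fun c => norm_apply_le_mul_l1 _ c fun t _ => ?_⟩, rfl⟩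
    simpa using hM t

end Cobdry

section Lipschitz

variable {W} {G : SimpleGraph V} {K : ℝ}

lemma norm_sub_le_mul_length {E : Type*} [SeminormedAddCommGroup E] {g : V → E}
    (hadj : ∀ x y, G.Adj x y → ‖g y - g x‖ ≤ K) {x y : V} (p : G.Walk x y) :
    ‖g y - g x‖ ≤ K * p.length := by
  induction p with
  | nil => simp
  | @cons a b c hab q ih =>
    calc ‖g c - g a‖ ≤ ‖g c - g b‖ + ‖g b - g a‖ := norm_sub_le_norm_sub_add_norm_sub _ _ _
      _ ≤ K * q.length + K := add_le_add ih (hadj a b hab)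
      _ = K * (q.cons hab).length := by
          rw [SimpleGraph.Walk.length_cons]
          push_cast
          ring

lemma mem_LipFuns_of_adj {g : V → W} (hconn : G.Connected)
    (hadj : ∀ x y, G.Adj x y → ‖g y - g x‖ ≤ K) : g ∈ LipFuns W G := by
  refine ⟨K, fun x y => ?_⟩
  obtain ⟨p, hp⟩ := hconn.exists_walk_length_eq_dist y x
  rw [SimpleGraph.dist_comm, ← hp]
  exact norm_sub_le_mul_length hadj p

lemma exists_mem_LipFuns_cobdry_eq (hconn : G.Connected) {f : C1 V →ₗ[ℝ] W}
    (hf : f ∈ Zone W G) : ∃ g ∈ LipFuns W G, cobdry W g = f := by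
  obtain ⟨hbdd, hcocycle⟩ := hf
  obtain ⟨M, hM⟩ := hbdd 1
  obtain ⟨x₀⟩ := hconn.nonempty
  refine ⟨_, mem_LipFuns_of_adj (K := M) hconn fun x y hxy => ?_,
    cobdry_eq_of_cocycle hcocycle x₀⟩
  have hedge : memC1R G 1 (single (x, y) (1 : ℝ)) := fun t ht => by
    obtain ⟨rfl, -⟩ := (mem_support_single _ _ _).1 ht
    exact ⟨hxy.reachable, SimpleGraph.dist_le (SimpleGraph.Walk.cons hxy .nil)⟩
  have hdiff := cobdry_single (fun z => f (single (x₀, z) 1)) x y 1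
  rw [one_smul, cobdry_eq_of_cocycle hcocycle x₀] at hdiff
  rw [← hdiff]
  simpa only [one_smul, l1_single, mul_one] using hM _ hedge

end Lipschitz

/-- H¹_{(∞)}(X;W) of a connected graph X is isomorphic to
Lipschitz functions modulo bounded functions. -/
theorem H1_iso_lip_mod_bounded (G : SimpleGraph V) (hconn : G.Connected) :
    Nonempty
      ((Zone W G ⧸ (Bone W G).comap (Zone W G).subtype) ≃ₗ[ℝ]
        (LipFuns W G ⧸ (BddFuns (V := V) W).comap (LipFuns W G).subtype)) := by
  set N := (Bone W G).comap (Zone W G).subtype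
  let Φ : LipFuns W G →ₗ[ℝ] Zone W G :=
    ((cobdry W).domRestrict (LipFuns W G)).codRestrict (Zone W G) fun g => cobdry_mem_Zone g.2
  have hsurj : Function.Surjective (N.mkQ ∘ₗ Φ) := by
    refine N.mkQ_surjective.comp fun f => ?_
    obtain ⟨g, hg, hgf⟩ := exists_mem_LipFuns_cobdry_eq hconn f.2
    exact ⟨⟨g, hg⟩, Subtype.ext hgf⟩
  have hker : (BddFuns W).comap (LipFuns W G).subtype = LinearMap.ker (N.mkQ ∘ₗ Φ) := by
    ext g
    rw [LinearMap.ker_comp, Submodule.ker_mkQ]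
    exact (cobdry_mem_Bone_iff (G := G)).symm
  exact ⟨((Submodule.quotEquivOfEq _ _ hker).trans
    ((N.mkQ ∘ₗ Φ).quotKerEquivOfSurjective hsurj)).symm⟩
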